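/- arXiv:1909.03359 — 2 statements merged into one kernel-verified Lean document; each statement's English description precedes it below -/
import Mathlib

section
/- Let g1, ..., gk be vectors in ℝ^n such that the iterated Gradient Combiner GC(g1, ..., gk) = GC(gk, GC(g1, ..., g_{k-1})) is well-defined (each intermediate second argument is nonzero in the recursive application). Then ‖GC(g1, ..., gk)‖² ≤ Σ_{j=1}^{k} ‖gj‖². -/
/-!
`GC a b` is `b` plus the component of `a` orthogonal to `b`, so by Pythagoras
`‖GC a b‖² = ‖b‖² + ‖a‖² - ⟪b, a⟫² / ‖b‖² ≤ ‖a‖² + ‖b‖²`; iterating along the recursion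
gives the bound.
-/

open scoped RealInnerProductSpace

noncomputable def GC {E : Type*} [NormedAddCommGroup E] [InnerProductSpace ℝ E] (a b : E) : E :=
  b + a - ((⟪b, a⟫ : ℝ) / ‖b‖ ^ 2) • b

noncomputable def gcAcc {E : Type*} [NormedAddCommGroup E] [InnerProductSpace ℝ E]
    (g : ℕ → E) : ℕ → E
  | 0 => g 0
  | j + 1 => GC (g (j + 1)) (gcAcc g j)

variable {E : Type*} [NormedAddCommGroup E] [InnerProductSpace ℝ E]

theorem norm_GC_sq (a b : E) :
    ‖GC a b‖ ^ 2 = ‖a‖ ^ 2 + ‖b‖ ^ 2 - ⟪b, a⟫ ^ 2 / ‖b‖ ^ 2 := by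
  rcases eq_or_ne b 0 with rfl | hb
  · simp [GC]
  have hb2 : ‖b‖ ^ 2 ≠ 0 := by positivity
  rw [GC, norm_sub_sq_real, norm_add_sq_real, inner_add_left, norm_smul, real_inner_smul_right,
    real_inner_smul_right, real_inner_self_eq_norm_sq, real_inner_comm a b, mul_pow,
    Real.norm_eq_abs, sq_abs]
  field_simp
  ring

theorem norm_GC_sq_le (a b : E) : ‖GC a b‖ ^ 2 ≤ ‖a‖ ^ 2 + ‖b‖ ^ 2 := by
  rw [norm_GC_sq]
  have : 0 ≤ ⟪b, a⟫ ^ 2 / ‖b‖ ^ 2 := by positivity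
  linarith

theorem norm_gcAcc_sq_le (g : ℕ → E) (k : ℕ) :
    ‖gcAcc g k‖ ^ 2 ≤ ∑ j ∈ Finset.range (k + 1), ‖g j‖ ^ 2 := by
  induction k with
  | zero => simp [gcAcc]
  | succ k ih =>
    rw [Finset.sum_range_succ]
    calc ‖gcAcc g (k + 1)‖ ^ 2 ≤ ‖g (k + 1)‖ ^ 2 + ‖gcAcc g k‖ ^ 2 := norm_GC_sq_le _ _
      _ ≤ _ := by linarith

theorem stmt13_general {n : ℕ} (k : ℕ) (g : ℕ → EuclideanSpace ℝ (Fin n)) :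
    ‖gcAcc g k‖ ^ 2 ≤ ∑ j ∈ Finset.range (k + 1), ‖g j‖ ^ 2 :=
  norm_gcAcc_sq_le g k

theorem stmt13 {n : ℕ} (k : ℕ) (g : ℕ → EuclideanSpace ℝ (Fin n))
    (h : ∀ j < k, gcAcc g j ≠ 0) :
    ‖gcAcc g k‖ ^ 2 ≤ ∑ j ∈ Finset.range (k + 1), ‖g j‖ ^ 2 :=
  stmt13_general k g
end

section
/- Let G = {a1, ..., aN} be a finite nonempty set of nonzero vectors in ℝ^n with mean μ = (1/N)·Σ ai. If g1 and g2 are independent uniformly distributed random vectors on G, then μᵀ·E[GC(g1, g2)] ≥ ‖μ‖², where GC(g1, g2) = g2 + g1 - ((g2ᵀ·g1)/‖g2‖²)·g2. -/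
open scoped RealInnerProductSpace

/-!
`GC a b` is affine in `a`, so averaging over `g1` replaces it by the mean: `E[GC(g1, g2)] = E[GC(μ, g2)]`.
Moreover `⟪μ, GC μ b⟫ = ⟪μ, b⟫ + ‖μ‖² - ⟪μ, b⟫² / ‖b‖² ≥ ⟪μ, b⟫` by Cauchy–Schwarz, and averaging
`⟪μ, b⟫` over `b ∈ G` gives `‖μ‖²`.
-/

open Finset

section

variable {E : Type*} [NormedAddCommGroup E] [InnerProductSpace ℝ E]

theorem sum_GC_left_eq_card_smul {s : Finset E} {μ : E} (hμ : ∑ a ∈ s, a = (#s : ℝ) • μ) (b : E) :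
    ∑ a ∈ s, GC a b = (#s : ℝ) • GC μ b := by
  simp only [GC]
  rw [sum_sub_distrib, sum_add_distrib, ← sum_smul, ← sum_div, ← inner_sum, hμ, sum_const,
    real_inner_smul_right]
  module

theorem inner_le_inner_GC_self (a b : E) : ⟪a, b⟫ ≤ ⟪a, GC a b⟫ := by
  have hproj : ⟪b, a⟫ / ‖b‖ ^ 2 * ⟪a, b⟫ ≤ ‖a‖ ^ 2 := by
    rw [real_inner_comm, div_mul_eq_mul_div]
    refine div_le_of_le_mul₀ (by positivity) (by positivity) ?_
    simpa only [real_inner_self_eq_norm_sq] using real_inner_mul_inner_self_le a b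
  simp only [GC, inner_sub_right, inner_add_right, real_inner_smul_right, real_inner_self_eq_norm_sq]
  linarith

end

theorem stmt16_general {n : ℕ} (G : Finset (EuclideanSpace ℝ (Fin n))) (hne : G.Nonempty)
    (μ : EuclideanSpace ℝ (Fin n)) (hμ : μ = (G.card : ℝ)⁻¹ • ∑ a ∈ G, a) :
    ‖μ‖ ^ 2 ≤ ⟪μ, ((G.card : ℝ) ^ 2)⁻¹ • ∑ a ∈ G, ∑ b ∈ G, GC a b⟫ := by
  have hN : (#G : ℝ) ≠ 0 := by exact_mod_cast hne.card_pos.ne'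
  have hsum : ∑ a ∈ G, a = (#G : ℝ) • μ := by rw [hμ, smul_inv_smul₀ hN]
  calc ‖μ‖ ^ 2 = (#G : ℝ)⁻¹ * ⟪μ, ∑ b ∈ G, b⟫ := by
        rw [hsum, real_inner_smul_right, real_inner_self_eq_norm_sq, inv_mul_cancel_left₀ hN]
    _ ≤ (#G : ℝ)⁻¹ * ∑ b ∈ G, ⟪μ, GC μ b⟫ := by
        rw [inner_sum]
        gcongr with b
        exact inner_le_inner_GC_self μ b
    _ = ⟪μ, ((G.card : ℝ) ^ 2)⁻¹ • ∑ a ∈ G, ∑ b ∈ G, GC a b⟫ := by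
        rw [sum_comm, sum_congr rfl fun b _ => sum_GC_left_eq_card_smul hsum b, ← smul_sum,
          smul_smul, real_inner_smul_right, inner_sum]
        field_simp

/-- For `g1, g2` independent and uniform on the finite set `G`, the expectation
`E[GC(g1, g2)]` is the double average `(1/N²) ∑_{a ∈ G} ∑_{b ∈ G} GC(a, b)`. -/
theorem stmt16 {n : ℕ} (G : Finset (EuclideanSpace ℝ (Fin n))) (hne : G.Nonempty)
    (hnz : ∀ a ∈ G, a ≠ 0)
    (μ : EuclideanSpace ℝ (Fin n)) (hμ : μ = (G.card : ℝ)⁻¹ • ∑ a ∈ G, a) :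
    ‖μ‖ ^ 2 ≤ ⟪μ, ((G.card : ℝ) ^ 2)⁻¹ • ∑ a ∈ G, ∑ b ∈ G, GC a b⟫ :=
  stmt16_general G hne μ hμ
end
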